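/- Assume χ > 0 and let κ > 0. The vector u := χ⁻¹·𝟏 + P lies in H⁰ and satisfies (u | γ_b⁰)₀ = 1, (u | γ_{k,m}⁰)₀ = 0 for all k, m, and (u|u)₀ = 1/χ; i.e. u equals the fundamental weight ω_b at the branching node and (ω_b|ω_b)₀ = 1/χ. Moreover, setting H₀ := √(κχ)·u and H_{k,p} := √(κ·a_k)·φ_{k,p}, one has (H₀|H₀)₀ = κ, (H₀|H_{k,p})₀ = 0 for all k,p, and (H_{k,p}|H_{k',p'})₀ = κ if k = k' and p' = a_k − p, and 0 otherwise. -/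
import Mathlib


open scoped BigOperators

noncomputable section

/-- Indices of the twisted sectors: `⟨k, p⟩` encodes `φ_{k, p.val + 1}`. -/
abbrev TwIdx (a : Fin 3 → ℕ) := (k : Fin 3) × Fin (a k - 1)

/-- Index set of the basis `{𝟏, P} ∪ {φ_{k,p}}` of the Chen–Ruan cohomology `H`:
`Sum.inl 0 = 𝟏`, `Sum.inl 1 = P`, `Sum.inr ⟨k,p⟩ = φ_{k,p+1}`. -/
abbrev Idx (a : Fin 3 → ℕ) := Fin 2 ⊕ TwIdx a

/-- The Chen–Ruan cohomology `H` of `ℙ¹_{a₁,a₂,a₃}`, as coordinates on the basis. -/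
abbrev HSp (a : Fin 3 → ℕ) := Idx a → ℂ

/-- The unit class `𝟏`. -/
def eOne (a : Fin 3 → ℕ) : HSp a := fun i => if i = Sum.inl 0 then 1 else 0

/-- The point class `P`. -/
def eP (a : Fin 3 → ℕ) : HSp a := fun i => if i = Sum.inl 1 then 1 else 0

/-- The twisted class `φ_{k,p}` (with `p : Fin (a k - 1)` encoding `p.val + 1`). -/
def ePhi (a : Fin 3 → ℕ) (k : Fin 3) (p : Fin (a k - 1)) : HSp a :=
  fun i => if i = Sum.inr ⟨k, p⟩ then 1 else 0

/-- `d_{k,p} = 1 - p/a_k`. -/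
def dd (a : Fin 3 → ℕ) (k : Fin 3) (p : Fin (a k - 1)) : ℂ :=
  1 - ((p.val : ℂ) + 1) / (a k : ℂ)

/-- `χ = 1/a₁ + 1/a₂ + 1/a₃ - 1`. -/
def chiQ (a : Fin 3 → ℕ) : ℚ := 1 / (a 0) + 1 / (a 1) + 1 / (a 2) - 1

/-- The Poincaré pairing: `(𝟏,P) = 1`, `(φ_{k,p}, φ_{k,a_k-p}) = 1/a_k`
(note `Fin.rev p` encodes `a_k - p`), all other pairings of basis vectors `0`. -/
def pairH (a : Fin 3 → ℕ) (x y : HSp a) : ℂ :=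
  x (Sum.inl 0) * y (Sum.inl 1) + x (Sum.inl 1) * y (Sum.inl 0) +
    ∑ k : Fin 3, ∑ p : Fin (a k - 1),
      (1 / (a k : ℂ)) * x (Sum.inr ⟨k, p⟩) * y (Sum.inr ⟨k, p.rev⟩)

/-- The operator `ρ`: `ρ(𝟏) = χP`, `ρ(P) = 0`, `ρ(φ_{k,p}) = 0`. -/
def rhoOp (a : Fin 3 → ℕ) (x : HSp a) : HSp a :=
  fun i => if i = Sum.inl 1 then (chiQ a : ℂ) * x (Sum.inl 0) else 0

/-- The intersection form on `H⁰`: `(x|y)₀ := (x, (1-ρ)y)`. -/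
def iform0 (a : Fin 3 → ℕ) (x y : HSp a) : ℂ := pairH a x (y - rhoOp a y)

/-- The subspace `H⁰ ⊂ H`, spanned by `𝟏 + χP` and the twisted classes `φ_{k,p}`. -/
def H0 (a : Fin 3 → ℕ) : Submodule ℂ (HSp a) :=
  Submodule.span ℂ ({eOne a + (chiQ a : ℂ) • eP a} ∪
    Set.range (fun i : TwIdx a => ePhi a i.1 i.2))

/-- `ζ_k = e^{2πi/a_k}`. -/
def zeta (a : Fin 3 → ℕ) (k : Fin 3) : ℂ :=
  Complex.exp (2 * (Real.pi : ℂ) * Complex.I / (a k : ℂ))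

/-- The simple root at the branching node: `γ_b⁰ = 𝟏 + χP + Σ_{k,p} φ_{k,p}`. -/
def gammaB (a : Fin 3 → ℕ) : HSp a :=
  eOne a + (chiQ a : ℂ) • eP a + ∑ k : Fin 3, ∑ p : Fin (a k - 1), ePhi a k p

/-- The simple roots on the legs:
`γ_{k,m}⁰ = Σ_{p=1}^{a_k-1} (ζ_k^{mp} - ζ_k^{(m-1)p})·φ_{k,p}`
(with `m : Fin (a k - 1)` encoding `m.val + 1`). -/
def gammaT (a : Fin 3 → ℕ) (k : Fin 3) (m : Fin (a k - 1)) : HSp a :=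
  ∑ p : Fin (a k - 1),
    (zeta a k ^ ((m.val + 1) * (p.val + 1)) - zeta a k ^ (m.val * (p.val + 1))) •
      ePhi a k p

/-- The fundamental weight at the branching node: `ω_b = χ⁻¹·𝟏 + P`. -/
def omegaB (a : Fin 3 → ℕ) : HSp a := ((chiQ a : ℂ))⁻¹ • eOne a + eP a

lemma iform0_eval (a : Fin 3 → ℕ) (x y : HSp a) :
    iform0 a x y = x (Sum.inl 0) * (y (Sum.inl 1) - (chiQ a : ℂ) * y (Sum.inl 0))
      + x (Sum.inl 1) * y (Sum.inl 0)
      + ∑ k : Fin 3, ∑ p : Fin (a k - 1),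
          (1 / (a k : ℂ)) * x (Sum.inr ⟨k, p⟩) * y (Sum.inr ⟨k, p.rev⟩) := by
  simp [iform0, pairH, rhoOp, Pi.sub_apply]

lemma iform0_smul_smul (a : Fin 3 → ℕ) (c c' : ℂ) (x y : HSp a) :
    iform0 a (c • x) (c' • y) = c * c' * iform0 a x y := by
  simp only [iform0_eval, Pi.smul_apply, smul_eq_mul, mul_add, mul_sub, Finset.mul_sum]
  congr 1
  · congr 1 <;> ring
  · exact Finset.sum_congr rfl fun k _ => Finset.sum_congr rfl fun p _ => by ring

lemma sum_ind (a : Fin 3 → ℕ) (f : ∀ k : Fin 3, Fin (a k - 1) → ℂ) (j : TwIdx a) :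
    (∑ k : Fin 3, ∑ p : Fin (a k - 1), if (⟨k, p⟩ : TwIdx a) = j then f k p else 0)
      = f j.1 j.2 := by
  rw [Finset.sum_sigma' Finset.univ (fun _ => Finset.univ)
    (fun k p => if (⟨k, p⟩ : TwIdx a) = j then f k p else 0)]
  rw [Finset.univ_sigma_univ]
  exact (Finset.sum_ite_eq' Finset.univ j (fun x => f x.1 x.2)).trans (by simp)

lemma sigma_eq_iff (a : Fin 3 → ℕ) (k k' : Fin 3) (p : Fin (a k - 1)) (p' : Fin (a k' - 1)) :
    (⟨k, p⟩ : TwIdx a) = ⟨k', p'⟩ ↔ k = k' ∧ (p : ℕ) = (p' : ℕ) := by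
  constructor
  · intro h
    obtain ⟨h1, h2⟩ := Sigma.mk.inj_iff.mp h
    subst h1
    exact ⟨rfl, congrArg Fin.val (eq_of_heq h2)⟩
  · rintro ⟨rfl, h⟩
    exact congrArg _ (Fin.ext h)

/-- `ω_b = χ⁻¹·𝟏 + P` lies in `H⁰`, pairs to `1` with `γ_b⁰` and to `0` with every
`γ_{k,m}⁰`, and `(ω_b|ω_b)₀ = 1/χ`. Moreover the normalized eigenbasis
`H₀ := √(κχ)·ω_b`, `H_{k,p} := √(κ·a_k)·φ_{k,p}` satisfies `(H₀|H₀)₀ = κ`,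
`(H₀|H_{k,p})₀ = 0`, and `(H_{k,p}|H_{k',p'})₀ = κ` iff `k = k'` and `p' = a_k - p`
(encoded by `p' = p.rev`), else `0`. -/
theorem stmt10 (a : Fin 3 → ℕ) (ha : ∀ k, 0 < a k) (hchi : 0 < chiQ a)
    (κ : ℝ) (hκ : 0 < κ) :
    omegaB a ∈ H0 a ∧
    iform0 a (omegaB a) (gammaB a) = 1 ∧
    (∀ (k : Fin 3) (m : Fin (a k - 1)), iform0 a (omegaB a) (gammaT a k m) = 0) ∧
    iform0 a (omegaB a) (omegaB a) = 1 / (chiQ a : ℂ) ∧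
    iform0 a ((Real.sqrt (κ * (chiQ a : ℝ)) : ℂ) • omegaB a)
        ((Real.sqrt (κ * (chiQ a : ℝ)) : ℂ) • omegaB a) = (κ : ℂ) ∧
    (∀ (k : Fin 3) (p : Fin (a k - 1)),
      iform0 a ((Real.sqrt (κ * (chiQ a : ℝ)) : ℂ) • omegaB a)
        ((Real.sqrt (κ * (a k : ℝ)) : ℂ) • ePhi a k p) = 0) ∧
    (∀ (k k' : Fin 3) (p : Fin (a k - 1)) (p' : Fin (a k' - 1)),
      iform0 a ((Real.sqrt (κ * (a k : ℝ)) : ℂ) • ePhi a k p)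
          ((Real.sqrt (κ * (a k' : ℝ)) : ℂ) • ePhi a k' p') =
        if k = k' ∧ (p' : ℕ) = (p.rev : ℕ) then (κ : ℂ) else 0) := by
  have hχC : (chiQ a : ℂ) ≠ 0 := by
    exact_mod_cast (Rat.cast_ne_zero (α := ℂ)).mpr (ne_of_gt hchi)
  have homega0 : omegaB a (Sum.inl 0) = (chiQ a : ℂ)⁻¹ := by simp [omegaB, eOne, eP]
  have homega1 : omegaB a (Sum.inl 1) = 1 := by simp [omegaB, eOne, eP]
  have homegar : ∀ i : TwIdx a, omegaB a (Sum.inr i) = 0 := by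
    intro i; simp [omegaB, eOne, eP]
  have hself : iform0 a (omegaB a) (omegaB a) = 1 / (chiQ a : ℂ) := by
    rw [iform0_eval]
    simp [homega0, homega1, homegar, mul_inv_cancel₀ hχC, one_div]
  have hphi : ∀ (k k' : Fin 3) (p : Fin (a k - 1)) (p' : Fin (a k' - 1)),
      iform0 a (ePhi a k p) (ePhi a k' p') =
        if k = k' ∧ (p' : ℕ) = (p.rev : ℕ) then 1 / (a k : ℂ) else 0 := by
    intro k k' p p'
    rw [iform0_eval]
    have h1 : ePhi a k' p' (Sum.inl 0) = 0 := by simp [ePhi]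
    have h2 : ePhi a k' p' (Sum.inl 1) = 0 := by simp [ePhi]
    rw [h1, h2]
    have hsum : (∑ k'' : Fin 3, ∑ p'' : Fin (a k'' - 1),
        (1 / (a k'' : ℂ)) * ePhi a k p (Sum.inr ⟨k'', p''⟩) *
          ePhi a k' p' (Sum.inr ⟨k'', p''.rev⟩)) =
        (1 / (a k : ℂ)) * ePhi a k' p' (Sum.inr ⟨k, p.rev⟩) := by
      have := sum_ind a
        (fun k'' p'' => (1 / (a k'' : ℂ)) * ePhi a k' p' (Sum.inr ⟨k'', p''.rev⟩))
        ⟨k, p⟩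
      rw [← this]
      refine Finset.sum_congr rfl fun k'' _ => Finset.sum_congr rfl fun p'' _ => ?_
      simp only [ePhi, Sum.inr.injEq]
      by_cases h : (⟨k'', p''⟩ : TwIdx a) = ⟨k, p⟩ <;> simp [h]
    have h3 : ePhi a k p (Sum.inl 0) = 0 := by simp [ePhi]
    have h4 : ePhi a k p (Sum.inl 1) = 0 := by simp [ePhi]
    rw [h3, h4, hsum]
    have hcond : (Sum.inr ⟨k, p.rev⟩ : Idx a) = Sum.inr ⟨k', p'⟩ ↔
        (k = k' ∧ (p' : ℕ) = (p.rev : ℕ)) := by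
      rw [Sum.inr.injEq, sigma_eq_iff]
      exact and_congr_right fun _ => eq_comm
    rw [show ePhi a k' p' (Sum.inr ⟨k, p.rev⟩) =
        if k = k' ∧ (p' : ℕ) = (p.rev : ℕ) then 1 else 0 from by
      simp only [ePhi]; exact if_congr hcond rfl rfl]
    split_ifs with h <;> ring
  refine ⟨?_, ?_, ?_, hself, ?_, ?_, ?_⟩
  · have : omegaB a = (chiQ a : ℂ)⁻¹ • (eOne a + (chiQ a : ℂ) • eP a) := by
      simp [omegaB, smul_add, smul_smul, inv_mul_cancel₀ hχC]
    rw [this]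
    exact Submodule.smul_mem _ _ (Submodule.subset_span (Or.inl rfl))
  · rw [iform0_eval]
    have h0 : gammaB a (Sum.inl 0) = 1 := by
      simp [gammaB, eOne, eP, ePhi, Finset.sum_apply]
    have h1 : gammaB a (Sum.inl 1) = (chiQ a : ℂ) := by
      simp [gammaB, eOne, eP, ePhi, Finset.sum_apply]
    simp [h0, h1, homega0, homega1, homegar, mul_inv_cancel₀ hχC, inv_mul_cancel₀ hχC]
  · intro k m
    rw [iform0_eval]
    have h0 : gammaT a k m (Sum.inl 0) = 0 := by simp [gammaT, ePhi, Finset.sum_apply]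
    have h1 : gammaT a k m (Sum.inl 1) = 0 := by simp [gammaT, ePhi, Finset.sum_apply]
    simp [h0, h1, homegar]
  · rw [iform0_smul_smul, hself]
    rw [← Complex.ofReal_mul, Real.mul_self_sqrt (by positivity)]
    push_cast
    field_simp
  · intro k p
    rw [iform0_smul_smul]
    have : iform0 a (omegaB a) (ePhi a k p) = 0 := by
      rw [iform0_eval]
      simp [ePhi, homegar]
    rw [this, mul_zero]
  · intro k k' p p'
    rw [iform0_smul_smul, hphi]
    by_cases h : k = k' ∧ (p' : ℕ) = (p.rev : ℕ)
    · rw [if_pos h, if_pos h]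
      obtain ⟨rfl, -⟩ := h
      rw [← Complex.ofReal_mul, Real.mul_self_sqrt (by positivity)]
      have hak : ((a k : ℝ) : ℂ) ≠ 0 := by
        exact_mod_cast Nat.cast_ne_zero.mpr (ha k).ne'
      push_cast
      push_cast at hak
      field_simp
    · rw [if_neg h, if_neg h, mul_zero]
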